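/- For P(x) = x^{2k+1}, ∫₀^∞ R(L₁,L₂,x) x^{2k+1} dx = (1/2)F_{2k+1}(L₁+L₂) + (1/2)F_{2k+1}(L₁−L₂) = (2k+1)! Σ_{m=0}^{k} Σ_{i+j=2m+1, j even} (L₁^i L₂^j/(i! j!)) · a_{k−m}/((2k−2m)!), where R(x,y,z) = (1/2)H(x+y,z) + (1/2)H(x−y,z) and F_{2k+1}(t) = Σ_{m=0}^k t^{2m+1} C(2k+1,2m+1) a_{k−m}. -/

import Mathlib

open Real MeasureTheory

/-- The kernel `H(x,y) = (1/(4π))(1/cosh((x−y)/4) − 1/cosh((x+y)/4))`. -/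
noncomputable def Hker (x y : ℝ) : ℝ :=
  (1 / (4 * Real.pi)) *
    (1 / Real.cosh ((x - y) / 4) - 1 / Real.cosh ((x + y) / 4))

/-- The kernel `R(x,y,z) = (1/2)H(x+y,z) + (1/2)H(x−y,z)`. -/
noncomputable def Rker (x y z : ℝ) : ℝ :=
  (1 / 2) * Hker (x + y) z + (1 / 2) * Hker (x - y) z

/-- The Taylor coefficients `a_n` of `1/cos(2πz) = Σ a_n z^{2n}/(2n)!`. -/
noncomputable def secCoeff (n : ℕ) : ℝ :=
  iteratedDeriv (2 * n) (fun x : ℝ => (Real.cos (2 * Real.pi * x))⁻¹) 0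

/-- The polynomial `F_{2k+1}(t) = Σ_{m=0}^k t^{2m+1} C(2k+1,2m+1) a_{k−m}`. -/
noncomputable def Fpoly (k : ℕ) (t : ℝ) : ℝ :=
  ∑ m ∈ Finset.range (k + 1),
    t ^ (2 * m + 1) * (Nat.choose (2 * k + 1) (2 * m + 1) : ℝ) * secCoeff (k - m)


/-!
The weight `w(u) = 1/(4π cosh(u/4))` has moment generating function
`∫ e^{su} w(u) du = 1/cos(2πs)` for `|s| < 1/4`: the substitution `v = σ(u/2)` (logistic sigmoid)
turns this integral into the Beta integral `B(a, 1 - a) = π / sin(πa)`. Differentiating under the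
integral sign at `s = 0` gives `a_n = ∫ u^{2n} w(u) du`. Since `H(t,x) = w(t - x) - w(t + x)`,
shifting the variable turns `∫_ℝ H(t,x) x^{2k+1} dx` into
`∫ w(u) ((t + u)^{2k+1} + (t - u)^{2k+1}) du`, whose binomial expansion keeps only the even moments
of `w`, i.e. the `a_n`; the integrand is even in `x`, so the integral over `(0, ∞)` is half of it.
The closed form for `R` is then pure algebra.
-/

open Set Filter Topology ProbabilityTheory

theorem add_pow_add_sub_pow {R : Type*} [CommRing R] (x y : R) (n : ℕ) :
    (x + y) ^ n + (x - y) ^ n =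
      2 * ∑ j ∈ (Finset.range (n + 1)).filter Even, x ^ (n - j) * y ^ j * (n.choose j : R) := by
  rw [add_comm x, sub_eq_neg_add, add_pow, add_pow, ← Finset.sum_add_distrib, Finset.sum_filter,
    Finset.mul_sum]
  refine Finset.sum_congr rfl fun j _ => ?_
  rcases Nat.even_or_odd j with hj | hj
  · rw [if_pos hj, hj.neg_pow]; ring
  · rw [if_neg (Nat.not_even_iff_odd.2 hj), hj.neg_pow]; ring

theorem Finset.sum_filter_even_range_two_mul_add_two {M : Type*} [AddCommMonoid M]
    (f : ℕ → M) (k : ℕ) :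
    ∑ j ∈ (range (2 * k + 2)).filter Even, f j = ∑ m ∈ range (k + 1), f (2 * m) := by
  induction k with
  | zero => simp [sum_filter, sum_range_succ]
  | succ k ih =>
    rw [show 2 * (k + 1) + 2 = 2 * k + 2 + 1 + 1 by ring, range_add_one, range_add_one,
      filter_insert, filter_insert, if_neg (by simp [parity_simps]),
      if_pos (by simp [parity_simps]), sum_insert (by simp), ih, sum_range_succ _ (k + 1), add_comm,
      mul_add_one]

theorem integral_rpow_mul_one_sub_rpow {a b : ℝ} (ha : 0 < a) (hb : 0 < b) :
    ∫ x in Ioo (0 : ℝ) 1, x ^ (a - 1) * (1 - x) ^ (b - 1) =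
      Gamma a * Gamma b / Gamma (a + b) := by
  have hβ := Complex.betaIntegral_eq_Gamma_mul_div a b (by simpa) (by simpa)
  rw [Complex.betaIntegral, ← Complex.ofReal_add, Complex.Gamma_ofReal, Complex.Gamma_ofReal,
    Complex.Gamma_ofReal] at hβ
  rw [← integral_Ioc_eq_integral_Ioo, ← intervalIntegral.integral_of_le zero_le_one]
  refine Complex.ofReal_injective ?_
  rw [← intervalIntegral.integral_ofReal]
  push_cast
  rw [← hβ]
  refine intervalIntegral.integral_congr fun x hx => ?_
  rw [uIcc_of_le zero_le_one] at hx
  rw [Complex.ofReal_cpow hx.1, Complex.ofReal_cpow (sub_nonneg.2 hx.2)]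
  push_cast; rfl

theorem sigmoid_mul_one_sub_sigmoid_mul_rpow (a x : ℝ) :
    sigmoid x * (1 - sigmoid x) * (sigmoid x ^ (a - 1) * (1 - sigmoid x) ^ (1 - a - 1)) =
      exp (a * x) / (1 + exp x) := by
  have hτ : 1 - sigmoid x = (1 + exp x)⁻¹ := by rw [← sigmoid_neg, sigmoid_def, neg_neg]
  have hσ : sigmoid x = exp x * (1 + exp x)⁻¹ := by
    rw [← hτ, ← sigmoid_neg, ← sigmoid_mul_rexp_neg, mul_comm, mul_assoc, ← exp_add]; simp
  have hpos : 0 < (1 + exp x)⁻¹ := by positivity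
  rw [hτ, hσ, mul_rpow (exp_pos x).le hpos.le, ← exp_mul, mul_assoc (exp (x * _)),
    ← rpow_add hpos, show a - 1 + (1 - a - 1) = -1 by ring, rpow_neg_one, div_eq_mul_inv,
    show a * x = x + x * (a - 1) by ring, exp_add]
  field_simp

theorem integral_exp_mul_div_cosh_mul {c s : ℝ} (hc : 0 < c) (hs : |s| < c) :
    ∫ u, exp (s * u) / cosh (c * u) = π / (c * cos (π * s / (2 * c))) := by
  obtain ⟨hs₁, hs₂⟩ := abs_lt.1 hs
  set a := (s / c + 1) / 2 with ha
  have ha₀ : 0 < a := by rw [ha, ← sub_pos]; field_simp; linarith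
  have ha₁ : 0 < 1 - a := by rw [ha]; field_simp; linarith
  have hβ : ∫ v in Ioo (0 : ℝ) 1, v ^ (a - 1) * (1 - v) ^ (1 - a - 1) = π / sin (π * a) := by
    rw [integral_rpow_mul_one_sub_rpow ha₀ ha₁, add_sub_cancel, Gamma_one, div_one,
      Gamma_mul_Gamma_one_sub]
  have hf (u : ℝ) : HasDerivAt (fun u => sigmoid (2 * c * u))
      (sigmoid (2 * c * u) * (1 - sigmoid (2 * c * u)) * (2 * c)) u :=
    (hasDerivAt_sigmoid _).comp u
      ((hasDerivAt_id u).const_mul (2 * c) |>.congr_deriv (mul_one _))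
  have hrange : range (fun u => sigmoid (2 * c * u)) = Ioo 0 1 := by
    rw [← range_sigmoid]
    exact (mul_left_surjective₀ (by positivity : 2 * c ≠ 0)).range_comp sigmoid
  have hsubst := integral_image_eq_integral_abs_deriv_smul MeasurableSet.univ
    (fun u _ => (hf u).hasDerivWithinAt)
    (sigmoid_injective.comp (mul_right_injective₀ (by positivity : 2 * c ≠ 0))).injOn
    (fun v => v ^ (a - 1) * (1 - v) ^ (1 - a - 1))
  rw [image_univ, hrange, hβ, Measure.restrict_univ] at hsubst
  have hpt (u : ℝ) : |sigmoid (2 * c * u) * (1 - sigmoid (2 * c * u)) * (2 * c)| •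
      (sigmoid (2 * c * u) ^ (a - 1) * (1 - sigmoid (2 * c * u)) ^ (1 - a - 1)) =
      c * (exp (s * u) / cosh (c * u)) := by
    have hσ := sigmoid_pos (2 * c * u)
    have hσ' := sub_pos.2 (sigmoid_lt_one (2 * c * u))
    rw [abs_of_pos (by positivity), smul_eq_mul, mul_comm _ (2 * c), mul_assoc,
      sigmoid_mul_one_sub_sigmoid_mul_rpow, cosh_eq]
    have he : exp (s * u) * exp (c * u) = exp (a * (2 * c * u)) := by
      rw [← exp_add, ha]; congr 1; field_simp
    have he' : exp (c * u) * exp (c * u) = exp (2 * c * u) := by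
      rw [← exp_add]; ring_nf
    rw [← he, ← he', exp_neg]
    field_simp
    ring
  simp_rw [hpt, integral_const_mul] at hsubst
  have hsin : sin (π * a) = cos (π * s / (2 * c)) := by
    rw [← sin_add_pi_div_two, ha]; congr 1; field_simp
  rw [hsin] at hsubst
  rw [mul_comm c (cos _), ← div_div, hsubst, mul_div_cancel_left₀ _ hc.ne']

noncomputable def sechWeight (u : ℝ) : ℝ := 1 / (4 * π) * (1 / cosh (u / 4))

noncomputable def sechMeasure : Measure ℝ :=
  volume.withDensity fun u => ENNReal.ofReal (sechWeight u)

lemma sechWeight_nonneg (u : ℝ) : 0 ≤ sechWeight u := by unfold sechWeight; positivity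

lemma continuous_sechWeight : Continuous sechWeight :=
  continuous_const.mul <| continuous_const.div (by fun_prop) fun u => (cosh_pos _).ne'

lemma sechWeight_neg (u : ℝ) : sechWeight (-u) = sechWeight u := by
  rw [sechWeight, neg_div, cosh_neg, sechWeight]

lemma integral_sechMeasure (g : ℝ → ℝ) : ∫ u, g u ∂sechMeasure = ∫ u, sechWeight u * g u := by
  rw [sechMeasure, integral_withDensity_eq_integral_toReal_smul
    continuous_sechWeight.measurable.ennreal_ofReal (ae_of_all _ fun _ => ENNReal.ofReal_lt_top)]
  simp_rw [ENNReal.toReal_ofReal (sechWeight_nonneg _), smul_eq_mul]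

lemma integrable_sechMeasure_iff {g : ℝ → ℝ} :
    Integrable g sechMeasure ↔ Integrable fun u => sechWeight u * g u := by
  rw [sechMeasure, integrable_withDensity_iff_integrable_smul'
    continuous_sechWeight.measurable.ennreal_ofReal (ae_of_all _ fun _ => ENNReal.ofReal_lt_top)]
  simp_rw [ENNReal.toReal_ofReal (sechWeight_nonneg _), smul_eq_mul]

lemma mgf_sechMeasure {s : ℝ} (hs : |s| < 4⁻¹) :
    mgf id sechMeasure s = (cos (2 * π * s))⁻¹ := by
  have hpt (u : ℝ) : sechWeight u * exp (s * id u) =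
      1 / (4 * π) * (exp (s * u) / cosh (4⁻¹ * u)) := by
    rw [sechWeight, id, div_eq_inv_mul u]; ring
  rw [mgf, integral_sechMeasure]
  simp_rw [hpt, integral_const_mul, integral_exp_mul_div_cosh_mul (by norm_num) hs]
  field_simp
  ring_nf

lemma Ioo_subset_integrableExpSet_sechMeasure :
    Ioo (-4⁻¹) 4⁻¹ ⊆ integrableExpSet id sechMeasure := fun s hs =>
  have hcos : 0 < cos (2 * π * s) :=
    cos_pos_of_mem_Ioo ⟨by nlinarith [hs.1, pi_pos], by nlinarith [hs.2, pi_pos]⟩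
  -- `mgf_sechMeasure` was computed without assuming integrability; its nonzero value forces it
  Integrable.of_integral_ne_zero <| by
    rw [← mgf, mgf_sechMeasure (abs_lt.2 hs)]; exact (inv_pos.2 hcos).ne'

lemma zero_mem_interior_integrableExpSet_sechMeasure :
    0 ∈ interior (integrableExpSet id sechMeasure) :=
  mem_interior_iff_mem_nhds.2 <|
    mem_of_superset (Ioo_mem_nhds (by norm_num) (by norm_num))
      Ioo_subset_integrableExpSet_sechMeasure

lemma integrable_sechWeight_mul_pow (n : ℕ) : Integrable fun u => sechWeight u * u ^ n :=
  integrable_sechMeasure_iff.1 <|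
    integrable_pow_of_mem_interior_integrableExpSet
      zero_mem_interior_integrableExpSet_sechMeasure n

lemma integrable_sechWeight_mul_eval (p : Polynomial ℝ) :
    Integrable fun u => sechWeight u * p.eval u := by
  simp_rw [Polynomial.eval_eq_sum_range, Finset.mul_sum, mul_left_comm (sechWeight _)]
  exact integrable_finsetSum _ fun i _ => (integrable_sechWeight_mul_pow i).const_mul _

lemma secCoeff_eq_integral (n : ℕ) : secCoeff n = ∫ u, sechWeight u * u ^ (2 * n) := by
  have hsec : (fun x : ℝ => (cos (2 * π * x))⁻¹) =ᶠ[𝓝 0] mgf id sechMeasure :=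
    eventually_of_mem (Ioo_mem_nhds (by norm_num : (-4⁻¹ : ℝ) < 0) (by norm_num : (0 : ℝ) < 4⁻¹))
      fun s hs => (mgf_sechMeasure (abs_lt.2 hs)).symm
  rw [secCoeff, (hsec.iteratedDeriv (2 * n)).eq_of_nhds,
    iteratedDeriv_mgf_zero zero_mem_interior_integrableExpSet_sechMeasure, integral_sechMeasure]
  rfl

lemma Hker_eq_sechWeight (t x : ℝ) : Hker t x = sechWeight (t - x) - sechWeight (t + x) :=
  mul_sub _ _ _

lemma integrable_sechWeight_mul_add_pow (t : ℝ) (n : ℕ) :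
    Integrable fun u => sechWeight u * (t + u) ^ n := by
  convert integrable_sechWeight_mul_eval ((Polynomial.C t + Polynomial.X) ^ n) using 3
  simp

lemma integrable_sechWeight_mul_sub_pow (t : ℝ) (n : ℕ) :
    Integrable fun u => sechWeight u * (t - u) ^ n := by
  convert integrable_sechWeight_mul_eval ((Polynomial.C t - Polynomial.X) ^ n) using 3
  simp

lemma integrable_sechWeight_sub_mul_pow (t : ℝ) (n : ℕ) :
    Integrable fun x => sechWeight (t - x) * x ^ n := by
  simpa using (integrable_sechWeight_mul_sub_pow t n).comp_sub_left t

lemma integrable_sechWeight_add_mul_pow (t : ℝ) (n : ℕ) :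
    Integrable fun x => sechWeight (t + x) * x ^ n := by
  convert (integrable_sechWeight_mul_eval ((Polynomial.X - Polynomial.C t) ^ n)).comp_add_left t
    using 3
  simp

lemma integrable_Hker_mul_pow (t : ℝ) (n : ℕ) : Integrable fun x => Hker t x * x ^ n := by
  simp_rw [Hker_eq_sechWeight, sub_mul]
  exact (integrable_sechWeight_sub_mul_pow t n).sub (integrable_sechWeight_add_mul_pow t n)

lemma integral_sechWeight_mul_add_pow_add_sub_pow (k : ℕ) (t : ℝ) :
    ∫ u, sechWeight u * ((t + u) ^ (2 * k + 1) + (t - u) ^ (2 * k + 1)) = 2 * Fpoly k t := by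
  have hpt (u : ℝ) : sechWeight u * ((t + u) ^ (2 * k + 1) + (t - u) ^ (2 * k + 1)) =
      ∑ j ∈ (Finset.range (2 * k + 2)).filter Even,
        2 * t ^ (2 * k + 1 - j) * ((2 * k + 1).choose j : ℝ) * (sechWeight u * u ^ j) := by
    rw [add_pow_add_sub_pow, Finset.mul_sum, Finset.mul_sum]
    exact Finset.sum_congr rfl fun j _ => by ring
  simp_rw [hpt]
  rw [integral_finsetSum _ fun j _ => (integrable_sechWeight_mul_pow j).const_mul _]
  simp_rw [integral_const_mul]
  rw [Finset.sum_filter_even_range_two_mul_add_two, Fpoly, ← Finset.sum_range_reflect,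
    Finset.mul_sum]
  refine Finset.sum_congr rfl fun m hm => ?_
  have hm : m ≤ k := Nat.lt_succ_iff.1 (Finset.mem_range.1 hm)
  rw [show k + 1 - 1 - m = k - m by omega, ← secCoeff_eq_integral,
    show 2 * k + 1 - 2 * (k - m) = 2 * m + 1 by omega,
    Nat.choose_symm_of_eq_add (show 2 * k + 1 = 2 * (k - m) + (2 * m + 1) by omega)]
  ring

lemma integral_Hker_mul_pow (k : ℕ) (t : ℝ) :
    ∫ x, Hker t x * x ^ (2 * k + 1) = 2 * Fpoly k t := by
  have hodd : Odd (2 * k + 1) := odd_two_mul_add_one k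
  calc ∫ x, Hker t x * x ^ (2 * k + 1)
      = (∫ x, sechWeight (t - x) * x ^ (2 * k + 1)) -
          ∫ x, sechWeight (t + x) * x ^ (2 * k + 1) := by
        simp_rw [Hker_eq_sechWeight, sub_mul]
        exact integral_sub (integrable_sechWeight_sub_mul_pow t _)
          (integrable_sechWeight_add_mul_pow t _)
    _ = (∫ u, sechWeight u * (t + u) ^ (2 * k + 1)) +
          ∫ u, sechWeight u * (t - u) ^ (2 * k + 1) := by
        rw [← integral_add_left_eq_self (fun x => sechWeight (t - x) * x ^ (2 * k + 1)) t,
          ← integral_sub_right_eq_self (fun x => sechWeight (t + x) * x ^ (2 * k + 1)) t,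
          sub_eq_add_neg, ← integral_neg]
        simp_rw [sub_add_cancel_left, sechWeight_neg, add_sub_cancel, ← neg_sub t, hodd.neg_pow,
          mul_neg, neg_neg]
    _ = 2 * Fpoly k t := by
        rw [← integral_add (integrable_sechWeight_mul_add_pow t _)
          (integrable_sechWeight_mul_sub_pow t _), ← integral_sechWeight_mul_add_pow_add_sub_pow]
        simp_rw [mul_add]

lemma setIntegral_Ioi_Hker_mul_pow (k : ℕ) (t : ℝ) :
    ∫ x in Ioi 0, Hker t x * x ^ (2 * k + 1) = Fpoly k t := by
  have heven (x : ℝ) : Hker t |x| * |x| ^ (2 * k + 1) = Hker t x * x ^ (2 * k + 1) := by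
    rcases abs_choice x with h | h
    · rw [h]
    · rw [h, Hker_eq_sechWeight, Hker_eq_sechWeight, sub_neg_eq_add, ← sub_eq_add_neg,
        (odd_two_mul_add_one k).neg_pow]
      ring
  have h := integral_comp_abs (f := fun x => Hker t x * x ^ (2 * k + 1))
  simp_rw [heven, integral_Hker_mul_pow] at h
  linarith

lemma half_Fpoly_add_add_half_Fpoly_sub (k : ℕ) (L₁ L₂ : ℝ) :
    (1 / 2) * Fpoly k (L₁ + L₂) + (1 / 2) * Fpoly k (L₁ - L₂) =
      (Nat.factorial (2 * k + 1) : ℝ) *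
        ∑ m ∈ Finset.range (k + 1),
          ∑ j ∈ (Finset.range (2 * m + 2)).filter (fun j => Even j),
            L₁ ^ (2 * m + 1 - j) * L₂ ^ j /
                ((Nat.factorial (2 * m + 1 - j) : ℝ) * (Nat.factorial j : ℝ)) *
              (secCoeff (k - m) / (Nat.factorial (2 * k - 2 * m) : ℝ)) := by
  simp only [Fpoly, Finset.mul_sum, ← Finset.sum_add_distrib]
  refine Finset.sum_congr rfl fun m hm => ?_
  have hm : m ≤ k := Nat.lt_succ_iff.1 (Finset.mem_range.1 hm)
  calc _ = ((L₁ + L₂) ^ (2 * m + 1) + (L₁ - L₂) ^ (2 * m + 1)) / 2 *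
        ((2 * k + 1).choose (2 * m + 1) * secCoeff (k - m)) := by ring
    _ = _ := by
      rw [add_pow_add_sub_pow, mul_div_cancel_left₀ _ two_ne_zero, Finset.sum_mul]
      refine Finset.sum_congr rfl fun j hj => ?_
      have hj : j ≤ 2 * m + 1 :=
        Nat.lt_succ_iff.1 (Finset.mem_range.1 (Finset.mem_filter.1 hj).1)
      rw [Nat.cast_choose ℝ hj, Nat.cast_choose ℝ (by omega : 2 * m + 1 ≤ 2 * k + 1),
        show 2 * k + 1 - (2 * m + 1) = 2 * k - 2 * m by omega]
      field_simp

/-- `∫₀^∞ R(L₁,L₂,x) x^{2k+1} dx = (1/2)F_{2k+1}(L₁+L₂) + (1/2)F_{2k+1}(L₁−L₂)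
  = (2k+1)! Σ_{m=0}^{k} Σ_{i+j=2m+1, j even} (L₁^i L₂^j/(i! j!)) a_{k−m}/((2k−2m)!)`. -/
theorem stmt17 (k : ℕ) (L₁ L₂ : ℝ) :
    (∫ x in Set.Ioi (0 : ℝ), Rker L₁ L₂ x * x ^ (2 * k + 1)) =
      (1 / 2) * Fpoly k (L₁ + L₂) + (1 / 2) * Fpoly k (L₁ - L₂) ∧
    (1 / 2) * Fpoly k (L₁ + L₂) + (1 / 2) * Fpoly k (L₁ - L₂) =
      (Nat.factorial (2 * k + 1) : ℝ) *
        ∑ m ∈ Finset.range (k + 1),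
          ∑ j ∈ (Finset.range (2 * m + 2)).filter (fun j => Even j),
            L₁ ^ (2 * m + 1 - j) * L₂ ^ j /
                ((Nat.factorial (2 * m + 1 - j) : ℝ) * (Nat.factorial j : ℝ)) *
              (secCoeff (k - m) / (Nat.factorial (2 * k - 2 * m) : ℝ)) := by
  refine ⟨?_, half_Fpoly_add_add_half_Fpoly_sub k L₁ L₂⟩
  simp_rw [Rker, add_mul, mul_assoc]
  rw [integral_add ((integrable_Hker_mul_pow _ _).integrableOn.const_mul _)
      ((integrable_Hker_mul_pow _ _).integrableOn.const_mul _),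
    integral_const_mul, integral_const_mul, setIntegral_Ioi_Hker_mul_pow,
    setIntegral_Ioi_Hker_mul_pow]
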